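/- (Proposition 4.2.) Suppose x : [0,1] → ℂⁿ is such that w := H·x is continuously differentiable, the boundary condition W_B·(w(1), w(0)) = 0 holds, and set y := W_C·(w(1), w(0)) ∈ ℂⁿ. Then ⟨Ax, x⟩_X + ⟨x, Ax⟩_X ≥ −‖P‖·‖y‖² + Re ∫₀¹ w(ζ)* G₀ w(ζ) dζ, where ‖P‖ is the operator norm of the 2n×2n matrix P with respect to the Euclidean norm on ℂ^{2n} and ‖y‖ is the Euclidean norm of y. -/

import Mathlib

open Matrix intervalIntegral
open scoped ComplexOrder

/-!
Since `H` is Hermitian and `w = H x`, the real part of `⟨Ax, x⟩_X + ⟨x, Ax⟩_X` is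
`Re ∫₀¹ w* (P₁ w' + G₀ w)`. As `P₁` is Hermitian, `2 Re (w* P₁ w')` is the derivative of `w* P₁ w`,
so the `P₁`-part is half the boundary flux `w(1)* P₁ w(1) - w(0)* P₁ w(0) = z* R₀* Σ R₀ z`, where
`z = (w(1), w(0))`. The boundary condition says `W_BC z = (0, y)`, so the flux is `v* P v` with
`v = (0, y)`, and `Re (v* P v) ≥ -‖P‖ ‖v‖² = -‖P‖ ‖y‖²`.
-/

/-- The energy inner product `⟨u,v⟩_X := (1/2)∫₀¹ u(ζ)* H(ζ) v(ζ) dζ`. -/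
noncomputable def energyInner {n : ℕ} (H : ℝ → Matrix (Fin n) (Fin n) ℂ)
    (u v : ℝ → Fin n → ℂ) : ℂ :=
  (1 / 2 : ℂ) * ∫ ζ in (0 : ℝ)..1, star (u ζ) ⬝ᵥ ((H ζ) *ᵥ v ζ)

section Algebra

variable {m R : Type*} [Fintype m]

theorem Matrix.IsHermitian.star_star_dotProduct_mulVec [CommSemiring R] [StarRing R]
    {M : Matrix m m R} (hM : M.IsHermitian) (u v : m → R) :
    star (star u ⬝ᵥ (M *ᵥ v)) = star v ⬝ᵥ (M *ᵥ u) := by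
  rw [star_dotProduct, star_star, star_mulVec, hM.eq, ← dotProduct_mulVec]

theorem star_sumElim_dotProduct_fromBlocks_neg_mulVec [Ring R] [StarRing R]
    (A : Matrix m m R) (a b : m → R) :
    star (Sum.elim a b) ⬝ᵥ (fromBlocks A 0 0 (-A) *ᵥ Sum.elim a b) =
      star a ⬝ᵥ (A *ᵥ a) - star b ⬝ᵥ (A *ᵥ b) := by
  simp [fromBlocks_mulVec, dotProduct, Fintype.sum_sum_type, Matrix.neg_mulVec, sub_eq_add_neg]

theorem star_mulVec_dotProduct_congr_mulVec [DecidableEq m] [CommRing R] [StarRing R]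
    {W : Matrix m m R} (hW : IsUnit W) (D : Matrix m m R) (z : m → R) :
    star (W *ᵥ z) ⬝ᵥ ((W⁻¹ᴴ * D * W⁻¹) *ᵥ (W *ᵥ z)) = star z ⬝ᵥ (D *ᵥ z) := by
  have hWW : W⁻¹ * W = 1 := nonsing_inv_mul W ((isUnit_iff_isUnit_det W).1 hW)
  rw [star_mulVec, ← dotProduct_mulVec, mulVec_mulVec, mulVec_mulVec, Matrix.mul_assoc,
    Matrix.mul_assoc, hWW, Matrix.mul_one, ← Matrix.mul_assoc, ← conjTranspose_mul, hWW,
    conjTranspose_one, Matrix.one_mul]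

theorem conjTranspose_mul_fromBlocks_swap_mul_eq_fromBlocks [DecidableEq m]
    {P₁ : Matrix m m ℂ} (hP₁ : P₁.IsHermitian) :
    ((Real.sqrt 2 : ℂ)⁻¹ • fromBlocks P₁ (-P₁) 1 1)ᴴ * fromBlocks 0 1 1 0 *
        ((Real.sqrt 2 : ℂ)⁻¹ • fromBlocks P₁ (-P₁) 1 1) = fromBlocks P₁ 0 0 (-P₁) := by
  have hc : (Real.sqrt 2 : ℂ)⁻¹ * star ((Real.sqrt 2 : ℂ)⁻¹) = 2⁻¹ := by
    rw [Complex.star_def, map_inv₀, Complex.conj_ofReal, ← mul_inv, ← Complex.ofReal_mul,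
      Real.mul_self_sqrt zero_le_two, Complex.ofReal_ofNat]
  simp only [conjTranspose_smul, Matrix.smul_mul, Matrix.mul_smul, smul_smul, hc]
  rw [fromBlocks_conjTranspose, fromBlocks_multiply, fromBlocks_multiply]
  simp only [conjTranspose_neg, conjTranspose_one, hP₁.eq, Matrix.mul_zero,
    Matrix.mul_one, Matrix.one_mul, zero_add, add_zero, fromBlocks_smul]
  congr 1 <;> module

end Algebra

section Calculus

variable {m 𝕜 : Type*} [Fintype m] [RCLike 𝕜]

theorem HasDerivWithinAt.matrix_mulVec {v : ℝ → m → 𝕜} {v' : m → 𝕜} {s : Set ℝ} {t : ℝ}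
    (M : Matrix m m 𝕜) (hv : HasDerivWithinAt v v' s t) :
    HasDerivWithinAt (fun t => M *ᵥ v t) (M *ᵥ v') s t :=
  hasDerivWithinAt_pi.2 fun i =>
    HasDerivWithinAt.fun_sum fun j _ => (hasDerivWithinAt_pi.1 hv j).const_mul (M i j)

theorem HasDerivWithinAt.dotProduct {u v : ℝ → m → 𝕜} {u' v' : m → 𝕜} {s : Set ℝ} {t : ℝ}
    (hu : HasDerivWithinAt u u' s t) (hv : HasDerivWithinAt v v' s t) :
    HasDerivWithinAt (fun t => u t ⬝ᵥ v t) (u' ⬝ᵥ v t + u t ⬝ᵥ v') s t := by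
  simp only [_root_.dotProduct, ← Finset.sum_add_distrib]
  exact HasDerivWithinAt.fun_sum fun i _ =>
    (hasDerivWithinAt_pi.1 hu i).mul (hasDerivWithinAt_pi.1 hv i)

theorem continuousOn_star_dotProduct_mulVec {X : Type*} [TopologicalSpace X] {u v : X → m → 𝕜}
    {s : Set X} (M : Matrix m m 𝕜) (hu : ContinuousOn u s) (hv : ContinuousOn v s) :
    ContinuousOn (fun t => star (u t) ⬝ᵥ (M *ᵥ v t)) s := by
  have hform : Continuous fun p : (m → 𝕜) × (m → 𝕜) => star p.1 ⬝ᵥ (M *ᵥ p.2) :=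
    continuous_fst.star.dotProduct (continuous_const.matrix_mulVec continuous_snd)
  exact hform.comp_continuousOn (hu.prodMk hv)

theorem integral_star_dotProduct_mulVec_deriv_add {M : Matrix m m 𝕜} {w w' : ℝ → m → 𝕜}
    {a b : ℝ} (hab : a ≤ b) (hw : ∀ t ∈ Set.Icc a b, HasDerivWithinAt w (w' t) (Set.Icc a b) t)
    (hw' : ContinuousOn w' (Set.Icc a b)) :
    ∫ t in a..b, (star (w' t) ⬝ᵥ (M *ᵥ w t) + star (w t) ⬝ᵥ (M *ᵥ w' t)) =
      star (w b) ⬝ᵥ (M *ᵥ w b) - star (w a) ⬝ᵥ (M *ᵥ w a) := by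
  have hwc : ContinuousOn w (Set.Icc a b) := fun t ht => (hw t ht).continuousWithinAt
  refine integral_eq_sub_of_hasDeriv_right_of_le hab (continuousOn_star_dotProduct_mulVec M hwc hwc)
    (fun t ht => ?_) (ContinuousOn.intervalIntegrable ?_)
  · exact (((hw t (Set.Ioo_subset_Icc_self ht)).star.dotProduct
      ((hw t (Set.Ioo_subset_Icc_self ht)).matrix_mulVec M)).hasDerivAt
        (Icc_mem_nhds ht.1 ht.2)).hasDerivWithinAt
  · rw [Set.uIcc_of_le hab]
    exact (continuousOn_star_dotProduct_mulVec M hw' hwc).add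
      (continuousOn_star_dotProduct_mulVec M hwc hw')

theorem re_integral_star_dotProduct_mulVec_deriv {M : Matrix m m 𝕜} (hM : M.IsHermitian)
    {w w' : ℝ → m → 𝕜} {a b : ℝ} (hab : a ≤ b)
    (hw : ∀ t ∈ Set.Icc a b, HasDerivWithinAt w (w' t) (Set.Icc a b) t)
    (hw' : ContinuousOn w' (Set.Icc a b)) :
    RCLike.re (∫ t in a..b, star (w t) ⬝ᵥ (M *ᵥ w' t)) =
      RCLike.re (star (w b) ⬝ᵥ (M *ᵥ w b) - star (w a) ⬝ᵥ (M *ᵥ w a)) / 2 := by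
  have hwc : ContinuousOn w (Set.Icc a b) := fun t ht => (hw t ht).continuousWithinAt
  have hint : ∀ {u v : ℝ → m → 𝕜}, ContinuousOn u (Set.Icc a b) → ContinuousOn v (Set.Icc a b) →
      IntervalIntegrable (fun t => star (u t) ⬝ᵥ (M *ᵥ v t)) MeasureTheory.volume a b :=
    fun hu hv => (continuousOn_star_dotProduct_mulVec M hu hv).intervalIntegrable_of_Icc hab
  have hconj : ∫ t in a..b, star (w' t) ⬝ᵥ (M *ᵥ w t) =
      star (∫ t in a..b, star (w t) ⬝ᵥ (M *ᵥ w' t)) := by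
    simp_rw [← hM.star_star_dotProduct_mulVec (w _), RCLike.star_def, intervalIntegral_conj]
  have hsum := integral_star_dotProduct_mulVec_deriv_add (M := M) hab hw hw'
  rw [integral_add (hint hw' hwc) (hint hwc hw'), hconj] at hsum
  rw [← hsum, map_add, RCLike.star_def, RCLike.conj_re]
  ring

end Calculus

section Energy

variable {n : ℕ} {H : ℝ → Matrix (Fin n) (Fin n) ℂ}

theorem star_energyInner (hH : ∀ ζ ∈ Set.Icc (0 : ℝ) 1, (H ζ).IsHermitian) (u v : ℝ → Fin n → ℂ) :
    star (energyInner H u v) = energyInner H v u := by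
  rw [energyInner, energyInner, star_mul', Complex.star_def, ← intervalIntegral_conj]
  congr 1
  · rw [map_div₀, map_one, map_ofNat]
  · refine integral_congr fun ζ hζ => ?_
    rw [Set.uIcc_of_le zero_le_one] at hζ
    exact (hH ζ hζ).star_star_dotProduct_mulVec (u ζ) (v ζ)

theorem energyInner_eq_integral_star_dotProduct (hH : ∀ ζ ∈ Set.Icc (0 : ℝ) 1, (H ζ).IsHermitian)
    {x w : ℝ → Fin n → ℂ} (hw : ∀ ζ ∈ Set.Icc (0 : ℝ) 1, w ζ = H ζ *ᵥ x ζ) (v : ℝ → Fin n → ℂ) :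
    energyInner H x v = 1 / 2 * ∫ ζ in (0 : ℝ)..1, star (w ζ) ⬝ᵥ v ζ := by
  rw [energyInner]
  congr 1
  refine integral_congr fun ζ hζ => ?_
  rw [Set.uIcc_of_le zero_le_one] at hζ
  rw [dotProduct_mulVec, ← (hH ζ hζ).eq, ← star_mulVec, hw ζ hζ]

theorem re_energyInner_add_energyInner_eq {P₁ G₀ : Matrix (Fin n) (Fin n) ℂ}
    (hP₁ : P₁.IsHermitian) (hH : ∀ ζ ∈ Set.Icc (0 : ℝ) 1, (H ζ).IsHermitian)
    {x w w' : ℝ → Fin n → ℂ} (hw : ∀ ζ ∈ Set.Icc (0 : ℝ) 1, w ζ = H ζ *ᵥ x ζ)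
    (hw' : ∀ ζ ∈ Set.Icc (0 : ℝ) 1, HasDerivWithinAt w (w' ζ) (Set.Icc 0 1) ζ)
    (hw'c : ContinuousOn w' (Set.Icc 0 1)) :
    (energyInner H (fun ζ => P₁ *ᵥ w' ζ + G₀ *ᵥ w ζ) x +
        energyInner H x (fun ζ => P₁ *ᵥ w' ζ + G₀ *ᵥ w ζ)).re =
      (star (w 1) ⬝ᵥ (P₁ *ᵥ w 1) - star (w 0) ⬝ᵥ (P₁ *ᵥ w 0)).re / 2 +
        (∫ ζ in (0 : ℝ)..1, star (w ζ) ⬝ᵥ (G₀ *ᵥ w ζ)).re := by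
  have hwc : ContinuousOn w (Set.Icc 0 1) := fun ζ hζ => (hw' ζ hζ).continuousWithinAt
  have hsplit : ∫ ζ in (0 : ℝ)..1, star (w ζ) ⬝ᵥ (P₁ *ᵥ w' ζ + G₀ *ᵥ w ζ) =
      (∫ ζ in (0 : ℝ)..1, star (w ζ) ⬝ᵥ (P₁ *ᵥ w' ζ)) +
        ∫ ζ in (0 : ℝ)..1, star (w ζ) ⬝ᵥ (G₀ *ᵥ w ζ) := by
    simp only [dotProduct_add]
    exact integral_add
      ((continuousOn_star_dotProduct_mulVec P₁ hwc hw'c).intervalIntegrable_of_Icc zero_le_one)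
      ((continuousOn_star_dotProduct_mulVec G₀ hwc hwc).intervalIntegrable_of_Icc zero_le_one)
  have hflux := re_integral_star_dotProduct_mulVec_deriv hP₁ zero_le_one hw' hw'c
  rw [RCLike.re_to_complex, RCLike.re_to_complex, Complex.sub_re] at hflux
  rw [← star_energyInner hH, energyInner_eq_integral_star_dotProduct hH hw, hsplit,
    Complex.add_re, Complex.star_def, Complex.conj_re]
  norm_num [Complex.mul_re]
  linarith

end Energy

section Norm

variable {𝕜 : Type*} [RCLike 𝕜]

theorem ContinuousLinearMap.neg_opNorm_mul_sq_le_re_inner {E : Type*} [NormedAddCommGroup E]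
    [InnerProductSpace 𝕜 E] (T : E →L[𝕜] E) (u : E) :
    -(‖T‖ * ‖u‖ ^ 2) ≤ RCLike.re (inner 𝕜 u (T u)) := by
  have h := re_inner_le_norm (𝕜 := 𝕜) (-u) (T u)
  rw [inner_neg_left, map_neg, norm_neg] at h
  nlinarith [T.le_opNorm u, norm_nonneg u]

theorem neg_norm_toEuclideanCLM_mul_sq_le_re_star_dotProduct_mulVec {ι : Type*} [Fintype ι]
    [DecidableEq ι] (P : Matrix ι ι 𝕜) (v : ι → 𝕜) :
    -(‖toEuclideanCLM (𝕜 := 𝕜) P‖ * ‖WithLp.toLp 2 v‖ ^ 2) ≤ RCLike.re (star v ⬝ᵥ (P *ᵥ v)) := by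
  have h := (toEuclideanCLM (𝕜 := 𝕜) P).neg_opNorm_mul_sq_le_re_inner (WithLp.toLp 2 v)
  rwa [toEuclideanCLM_toLp, EuclideanSpace.inner_toLp_toLp, dotProduct_comm] at h

theorem EuclideanSpace.norm_toLp_sumElim_zero {ι κ : Type*} [Fintype ι] [Fintype κ]
    (y : κ → 𝕜) : ‖WithLp.toLp 2 (Sum.elim (0 : ι → 𝕜) y)‖ = ‖WithLp.toLp 2 y‖ := by
  simp [EuclideanSpace.norm_eq, Fintype.sum_sum_type]

end Norm

theorem energy_balance_estimate_general
    (n : ℕ)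
    (P₁ : Matrix (Fin n) (Fin n) ℂ) (hP₁herm : P₁.IsHermitian)
    (G₀ : Matrix (Fin n) (Fin n) ℂ)
    (H : ℝ → Matrix (Fin n) (Fin n) ℂ)
    (hHherm : ∀ ζ ∈ Set.Icc (0 : ℝ) 1, (H ζ).IsHermitian)
    (W_B W_C : Matrix (Fin n) (Fin n ⊕ Fin n) ℂ)
    (W_BC : Matrix (Fin n ⊕ Fin n) (Fin n ⊕ Fin n) ℂ)
    (hW_BC : W_BC = Matrix.fromRows W_B W_C)
    (hW_BCinv : IsUnit W_BC)
    (R₀ : Matrix (Fin n ⊕ Fin n) (Fin n ⊕ Fin n) ℂ)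
    (hR₀ : R₀ = ((Real.sqrt 2 : ℂ))⁻¹ • Matrix.fromBlocks P₁ (-P₁) 1 1)
    (Sig : Matrix (Fin n ⊕ Fin n) (Fin n ⊕ Fin n) ℂ)
    (hSig : Sig = Matrix.fromBlocks 0 1 1 0)
    (P : Matrix (Fin n ⊕ Fin n) (Fin n ⊕ Fin n) ℂ)
    (hP : P = (W_BC⁻¹)ᴴ * R₀ᴴ * Sig * R₀ * W_BC⁻¹)
    (x w w' : ℝ → Fin n → ℂ)
    (hw : ∀ ζ ∈ Set.Icc (0 : ℝ) 1, w ζ = (H ζ) *ᵥ x ζ)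
    (hw' : ∀ ζ ∈ Set.Icc (0 : ℝ) 1, HasDerivWithinAt w (w' ζ) (Set.Icc 0 1) ζ)
    (hw'cont : ContinuousOn w' (Set.Icc 0 1))
    (hbdry : W_B *ᵥ Sum.elim (w 1) (w 0) = 0)
    (y : Fin n → ℂ)
    (hy : y = W_C *ᵥ Sum.elim (w 1) (w 0))
    (Ax : ℝ → Fin n → ℂ)
    (hAx : ∀ ζ, Ax ζ = P₁ *ᵥ w' ζ + G₀ *ᵥ w ζ) :
    -‖Matrix.toEuclideanCLM (𝕜 := ℂ) P‖ *
        ‖(EuclideanSpace.equiv (Fin n) ℂ).symm y‖ ^ 2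
      + (∫ ζ in (0 : ℝ)..1, star (w ζ) ⬝ᵥ (G₀ *ᵥ w ζ)).re ≤
    (energyInner H Ax x + energyInner H x Ax).re := by
  obtain rfl : Ax = fun ζ => P₁ *ᵥ w' ζ + G₀ *ᵥ w ζ := funext hAx
  set v : Fin n ⊕ Fin n → ℂ := Sum.elim 0 y with hv_def
  have hflux : star (w 1) ⬝ᵥ (P₁ *ᵥ w 1) - star (w 0) ⬝ᵥ (P₁ *ᵥ w 0) = star v ⬝ᵥ (P *ᵥ v) := by
    have hv : v = W_BC *ᵥ Sum.elim (w 1) (w 0) := by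
      rw [hv_def, hW_BC, fromRows_mulVec, hbdry, hy]
    rw [hP, hR₀, hSig, hv, ← star_sumElim_dotProduct_fromBlocks_neg_mulVec,
      ← conjTranspose_mul_fromBlocks_swap_mul_eq_fromBlocks hP₁herm,
      ← star_mulVec_dotProduct_congr_mulVec hW_BCinv]
    simp only [Matrix.mul_assoc]
  have hP_bound := neg_norm_toEuclideanCLM_mul_sq_le_re_star_dotProduct_mulVec P v
  have hnorm : ‖WithLp.toLp 2 v‖ = ‖(EuclideanSpace.equiv (Fin n) ℂ).symm y‖ :=
    EuclideanSpace.norm_toLp_sumElim_zero y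
  rw [hnorm, RCLike.re_to_complex] at hP_bound
  rw [re_energyInner_add_energyInner_eq hP₁herm hHherm hw hw' hw'cont, hflux]
  nlinarith [norm_nonneg (toEuclideanCLM (𝕜 := ℂ) P),
    norm_nonneg ((EuclideanSpace.equiv (Fin n) ℂ).symm y)]

/-- Proposition 4.2: if `w := H·x` is continuously differentiable,
`W_B (w(1), w(0)) = 0` and `y := W_C (w(1), w(0))`, then, with `(Ax)(ζ) = P₁w′(ζ) + G₀w(ζ)`,
`⟨Ax, x⟩_X + ⟨x, Ax⟩_X ≥ −‖P‖·‖y‖² + Re ∫₀¹ w(ζ)* G₀ w(ζ) dζ`, where `‖P‖` is the operator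
norm of `P` w.r.t. the Euclidean norm on `ℂ^{2n}` and `‖y‖` is the Euclidean norm of `y`. -/
theorem energy_balance_estimate
    (n : ℕ) (hn : 0 < n)
    (P₁ : Matrix (Fin n) (Fin n) ℂ) (hP₁herm : P₁.IsHermitian) (hP₁inv : IsUnit P₁)
    (G₀ : Matrix (Fin n) (Fin n) ℂ)
    (H : ℝ → Matrix (Fin n) (Fin n) ℂ)
    (hHcont : ∀ i j, ContinuousOn (fun ζ => H ζ i j) (Set.Icc 0 1))
    (hHherm : ∀ ζ ∈ Set.Icc (0 : ℝ) 1, (H ζ).IsHermitian)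
    (hHpos : ∀ ζ ∈ Set.Icc (0 : ℝ) 1, (H ζ).PosDef)
    (W_B W_C : Matrix (Fin n) (Fin n ⊕ Fin n) ℂ)
    (W_BC : Matrix (Fin n ⊕ Fin n) (Fin n ⊕ Fin n) ℂ)
    (hW_BC : W_BC = Matrix.fromRows W_B W_C)
    (hW_BCinv : IsUnit W_BC)
    (R₀ : Matrix (Fin n ⊕ Fin n) (Fin n ⊕ Fin n) ℂ)
    (hR₀ : R₀ = ((Real.sqrt 2 : ℂ))⁻¹ • Matrix.fromBlocks P₁ (-P₁) 1 1)
    (Sig : Matrix (Fin n ⊕ Fin n) (Fin n ⊕ Fin n) ℂ)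
    (hSig : Sig = Matrix.fromBlocks 0 1 1 0)
    (P : Matrix (Fin n ⊕ Fin n) (Fin n ⊕ Fin n) ℂ)
    (hP : P = (W_BC⁻¹)ᴴ * R₀ᴴ * Sig * R₀ * W_BC⁻¹)
    (x w w' : ℝ → Fin n → ℂ)
    (hw : ∀ ζ ∈ Set.Icc (0 : ℝ) 1, w ζ = (H ζ) *ᵥ x ζ)
    (hw' : ∀ ζ ∈ Set.Icc (0 : ℝ) 1, HasDerivWithinAt w (w' ζ) (Set.Icc 0 1) ζ)
    (hw'cont : ContinuousOn w' (Set.Icc 0 1))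
    (hbdry : W_B *ᵥ Sum.elim (w 1) (w 0) = 0)
    (y : Fin n → ℂ)
    (hy : y = W_C *ᵥ Sum.elim (w 1) (w 0))
    (Ax : ℝ → Fin n → ℂ)
    (hAx : ∀ ζ, Ax ζ = P₁ *ᵥ w' ζ + G₀ *ᵥ w ζ) :
    -‖Matrix.toEuclideanCLM (𝕜 := ℂ) P‖ *
        ‖(EuclideanSpace.equiv (Fin n) ℂ).symm y‖ ^ 2
      + (∫ ζ in (0 : ℝ)..1, star (w ζ) ⬝ᵥ (G₀ *ᵥ w ζ)).re ≤
    (energyInner H Ax x + energyInner H x Ax).re :=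
  energy_balance_estimate_general n P₁ hP₁herm G₀ H hHherm W_B W_C W_BC hW_BC hW_BCinv R₀ hR₀ Sig
    hSig P hP x w w' hw hw' hw'cont hbdry y hy Ax hAx
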